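/- arXiv:1608.08490 — 2 statements merged into one kernel-verified Lean document; each statement's English description precedes it below -/
import Mathlib

section
/- In the single-period problem, the optimal investment is proportional to wealth: v^* = k^* W if W \ge 0 and v^* = \hat{k}^* W if W < 0, where k^* = \arg\max_{z \in [A,B]} g(z) and \hat{k}^* = \arg\max_{z \in [-B,-A]} l(z). That is, U(v^* y) \ge U(v\,y) for every admissible v with A|W| \le v \le B|W|. -/
/-! The CPT functional is positively homogeneous of degree `α`: for `c > 0` the distribution
function of `c X` is that of `X` rescaled by `c`, and the substitution `x ↦ c x` in both integrals
against `x^(α-1) dx` pulls out `c^α` (which also forces `U(0) = 0`). Hence `U(z y) = g(z)` on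
`[A, B]`, and for `W > 0` every admissible `v = z W` has `U(v y) = W^α g(z)`, maximised at `k*`.
For `W < 0` write `v = (-z)(-W)` and use `l(z) = g(-z)`. -/

open MeasureTheory Set

/-- Cumulative distribution function. -/
noncomputable def cdf {Ω : Type*} [MeasurableSpace Ω] (μ : Measure Ω) (X : Ω → ℝ) (x : ℝ) : ℝ :=
  (μ {ω | X ω ≤ x}).toReal

/-- The CPT functional. -/
noncomputable def cptU {Ω : Type*} [MeasurableSpace Ω] (μ : Measure Ω)
    (Tp Tm : ℝ → ℝ) (α lam : ℝ) (X : Ω → ℝ) : ℝ :=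
  (∫ x in Ioi (0:ℝ), Tp (1 - cdf μ X x) * (α * x ^ (α - 1))) -
  ∫ x in Ioi (0:ℝ), Tm (cdf μ X (-x)) * (lam * (α * x ^ (α - 1)))

/-- `g(z) = z^α k 1_{z∈[0,B]} + (-z)^α h 1_{z∈[A,0]}`. -/
noncomputable def gfun (α k h A B : ℝ) (z : ℝ) : ℝ :=
  (if z ∈ Icc (0:ℝ) B then z ^ α * k else 0) + (if z ∈ Icc A 0 then (-z) ^ α * h else 0)

/-- `l(z) = (-z)^α k 1_{z∈[-B,0]} + z^α h 1_{z∈[0,-A]}`. -/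
noncomputable def lfun (α k h A B : ℝ) (z : ℝ) : ℝ :=
  (if z ∈ Icc (-B) (0:ℝ) then (-z) ^ α * k else 0) + (if z ∈ Icc 0 (-A) then z ^ α * h else 0)

lemma cdf_const_mul {Ω : Type*} [MeasurableSpace Ω] (μ : Measure Ω) (X : Ω → ℝ)
    {c : ℝ} (hc : 0 < c) (x : ℝ) :
    cdf μ (fun ω => c * X ω) x = cdf μ X (x / c) := by
  simp only [cdf, le_div_iff₀ hc, mul_comm c]

lemma integral_Ioi_comp_div_mul_rpow (F : ℝ → ℝ) {c : ℝ} (hc : 0 < c) (α : ℝ) :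
    ∫ x in Ioi (0:ℝ), F (x / c) * x ^ (α - 1) = c ^ α * ∫ x in Ioi (0:ℝ), F x * x ^ (α - 1) := by
  have hsub := integral_comp_mul_left_Ioi (fun x => F (x / c) * x ^ (α - 1)) 0 hc
  have hscaled : ∫ x in Ioi (0:ℝ), F (c * x / c) * (c * x) ^ (α - 1) =
      c ^ (α - 1) * ∫ x in Ioi (0:ℝ), F x * x ^ (α - 1) := by
    rw [← integral_const_mul]
    refine setIntegral_congr_fun measurableSet_Ioi fun x hx => ?_
    rw [mul_div_cancel_left₀ x hc.ne', Real.mul_rpow hc.le (le_of_lt hx)]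
    ring
  rw [mul_zero, hscaled, smul_eq_mul, Real.rpow_sub_one hc.ne'] at hsub
  field_simp at hsub
  linarith

section Homogeneity

variable {Ω : Type*} [MeasurableSpace Ω] (μ : Measure Ω) (Tp Tm : ℝ → ℝ) (α lam : ℝ)

lemma cptU_const_mul (X : Ω → ℝ) {c : ℝ} (hc : 0 < c) :
    cptU μ Tp Tm α lam (fun ω => c * X ω) = c ^ α * cptU μ Tp Tm α lam X := by
  simp only [cptU, cdf_const_mul μ X hc, ← mul_assoc, neg_div]
  rw [integral_Ioi_comp_div_mul_rpow (fun t => Tp (1 - cdf μ X t) * α) hc,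
    integral_Ioi_comp_div_mul_rpow (fun t => Tm (cdf μ X (-t)) * lam * α) hc]
  ring

lemma cptU_zero {α : ℝ} (hα : 0 < α) : cptU μ Tp Tm α lam (fun _ : Ω => 0) = 0 := by
  have hscale := cptU_const_mul μ Tp Tm α lam (fun _ : Ω => 0) two_pos
  simp only [mul_zero] at hscale
  by_contra hne
  have := (mul_eq_right₀ hne).1 hscale.symm
  linarith [Real.one_lt_rpow one_lt_two hα]

lemma cptU_mul_eq_gfun {α : ℝ} (hα : 0 < α) (y : Ω → ℝ) {A B z : ℝ} (hz : z ∈ Icc A B) :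
    cptU μ Tp Tm α lam (fun ω => z * y ω) =
      gfun α (cptU μ Tp Tm α lam y) (cptU μ Tp Tm α lam (fun ω => -y ω)) A B z := by
  obtain ⟨hAz, hzB⟩ := hz
  rcases lt_trichotomy z 0 with hneg | rfl | hpos
  · have hflip : (fun ω => z * y ω) = fun ω => -z * -y ω := by
      funext ω; ring
    rw [hflip, cptU_const_mul μ Tp Tm α lam _ (neg_pos.2 hneg)]
    simp [gfun, hneg.not_ge, hAz, hneg.le]
  · simp [gfun, cptU_zero μ Tp Tm lam hα, Real.zero_rpow hα.ne']
  · rw [cptU_const_mul μ Tp Tm α lam y hpos]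
    simp [gfun, hpos.le, hzB, hpos.not_ge]

lemma cptU_mul_le_of_forall_le (y : Ω → ℝ) {A B W k : ℝ} (hW : 0 ≤ W)
    (hk : ∀ z ∈ Icc A B,
      cptU μ Tp Tm α lam (fun ω => z * y ω) ≤ cptU μ Tp Tm α lam (fun ω => k * y ω))
    {v : ℝ} (hv : v ∈ Icc (A * W) (B * W)) :
    cptU μ Tp Tm α lam (fun ω => v * y ω) ≤ cptU μ Tp Tm α lam (fun ω => (k * W) * y ω) := by
  rcases hW.eq_or_lt with rfl | hWpos
  · have hv0 : v = 0 := by simpa using hv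
    simp [hv0]
  have hz : v / W ∈ Icc A B :=
    ⟨(le_div_iff₀ hWpos).2 hv.1, (div_le_iff₀ hWpos).2 hv.2⟩
  have hscale : ∀ t : ℝ, cptU μ Tp Tm α lam (fun ω => (t * W) * y ω) =
      W ^ α * cptU μ Tp Tm α lam (fun ω => t * y ω) := fun t => by
    rw [← cptU_const_mul μ Tp Tm α lam _ hWpos]
    congr 1; funext ω; ring
  calc cptU μ Tp Tm α lam (fun ω => v * y ω)
      = cptU μ Tp Tm α lam (fun ω => (v / W * W) * y ω) := by
        rw [div_mul_cancel₀ v hWpos.ne']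
    _ ≤ cptU μ Tp Tm α lam (fun ω => (k * W) * y ω) := by
        rw [hscale, hscale]
        exact mul_le_mul_of_nonneg_left (hk _ hz) (Real.rpow_nonneg hW α)

end Homogeneity

lemma lfun_eq_gfun_neg (α k h A B z : ℝ) : lfun α k h A B z = gfun α k h A B (-z) := by
  simp only [lfun, gfun, neg_neg, mem_Icc, neg_nonneg, neg_nonpos, neg_le, le_neg, and_comm]

theorem single_period_optimal_strategy_general {Ω : Type*} [MeasurableSpace Ω] (μ : Measure Ω)
    (Tp Tm : ℝ → ℝ) (α lam : ℝ) (hα : 0 < α) (y : Ω → ℝ) (A B W : ℝ) (kstar khat : ℝ)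
    (hk1 : kstar ∈ Icc A B)
    (hk2 : ∀ z ∈ Icc A B,
      gfun α (cptU μ Tp Tm α lam y) (cptU μ Tp Tm α lam (fun ω => -y ω)) A B z ≤
        gfun α (cptU μ Tp Tm α lam y) (cptU μ Tp Tm α lam (fun ω => -y ω)) A B kstar)
    (hk3 : khat ∈ Icc (-B) (-A))
    (hk4 : ∀ z ∈ Icc (-B) (-A),
      lfun α (cptU μ Tp Tm α lam y) (cptU μ Tp Tm α lam (fun ω => -y ω)) A B z ≤
        lfun α (cptU μ Tp Tm α lam y) (cptU μ Tp Tm α lam (fun ω => -y ω)) A B khat) :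
    A * |W| ≤ (if 0 ≤ W then kstar * W else khat * W) ∧
      (if 0 ≤ W then kstar * W else khat * W) ≤ B * |W| ∧
      ∀ v : ℝ, A * |W| ≤ v → v ≤ B * |W| →
        cptU μ Tp Tm α lam (fun ω => v * y ω) ≤
          cptU μ Tp Tm α lam (fun ω => (if 0 ≤ W then kstar * W else khat * W) * y ω) := by
  have hU : ∀ z ∈ Icc A B, cptU μ Tp Tm α lam (fun ω => z * y ω) =
      gfun α (cptU μ Tp Tm α lam y) (cptU μ Tp Tm α lam (fun ω => -y ω)) A B z :=
    fun z hz => cptU_mul_eq_gfun μ Tp Tm lam hα y hz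
  rcases le_or_gt 0 W with hW | hW
  · simp only [if_pos hW, abs_of_nonneg hW]
    refine ⟨mul_le_mul_of_nonneg_right hk1.1 hW, mul_le_mul_of_nonneg_right hk1.2 hW,
      fun v hv1 hv2 => cptU_mul_le_of_forall_le μ Tp Tm α lam y hW (fun z hz => ?_) ⟨hv1, hv2⟩⟩
    rw [hU z hz, hU kstar hk1]
    exact hk2 z hz
  · simp only [if_neg hW.not_ge, abs_of_neg hW]
    have hk' : -khat ∈ Icc A B := ⟨le_neg.1 hk3.2, neg_le.1 hk3.1⟩
    refine ⟨by nlinarith [hk3.2], by nlinarith [hk3.1], fun v hv1 hv2 => ?_⟩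
    have hopt := cptU_mul_le_of_forall_le μ Tp Tm α lam y (neg_nonneg.2 hW.le) (k := -khat)
      (fun z hz => ?_) ⟨hv1, hv2⟩
    · rwa [neg_mul_neg] at hopt
    have hl := hk4 (-z) ⟨neg_le_neg hz.2, neg_le_neg hz.1⟩
    rwa [lfun_eq_gfun_neg, lfun_eq_gfun_neg, neg_neg, ← hU z hz, ← hU _ hk'] at hl

/-- Single-period optimal strategy: `v* = k* W` if `W ≥ 0`, `v* = k̂* W` if `W < 0`, where
`k*` maximizes `g` on `[A,B]` and `k̂*` maximizes `l` on `[-B,-A]`; `v*` is admissible and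
dominates every admissible strategy. -/
theorem single_period_optimal_strategy {Ω : Type*} [MeasurableSpace Ω] (μ : Measure Ω)
    [IsProbabilityMeasure μ] (Tp Tm : ℝ → ℝ) (α lam : ℝ)
    (hα : 0 < α) (hα1 : α < 1) (hlam : 1 < lam)
    (hT0p : Tp 0 = 0) (hT1p : Tp 1 = 1) (hT0m : Tm 0 = 0) (hT1m : Tm 1 = 1)
    (y : Ω → ℝ) (hmeas : Measurable y) (hcont : Continuous (cdf μ y))
    (hint1 : ∀ v : ℝ, IntegrableOn
      (fun x => Tp (1 - cdf μ (fun ω => v * y ω) x) * (α * x ^ (α - 1))) (Ioi 0))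
    (hint2 : ∀ v : ℝ, IntegrableOn
      (fun x => Tm (cdf μ (fun ω => v * y ω) (-x)) * (lam * (α * x ^ (α - 1)))) (Ioi 0))
    (A B W : ℝ) (hA : A ≤ 0) (hB : 0 < B)
    (kstar khat : ℝ)
    (hk1 : kstar ∈ Icc A B)
    (hk2 : ∀ z ∈ Icc A B,
      gfun α (cptU μ Tp Tm α lam y) (cptU μ Tp Tm α lam (fun ω => -y ω)) A B z ≤
        gfun α (cptU μ Tp Tm α lam y) (cptU μ Tp Tm α lam (fun ω => -y ω)) A B kstar)
    (hk3 : khat ∈ Icc (-B) (-A))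
    (hk4 : ∀ z ∈ Icc (-B) (-A),
      lfun α (cptU μ Tp Tm α lam y) (cptU μ Tp Tm α lam (fun ω => -y ω)) A B z ≤
        lfun α (cptU μ Tp Tm α lam y) (cptU μ Tp Tm α lam (fun ω => -y ω)) A B khat) :
    A * |W| ≤ (if 0 ≤ W then kstar * W else khat * W) ∧
      (if 0 ≤ W then kstar * W else khat * W) ≤ B * |W| ∧
      ∀ v : ℝ, A * |W| ≤ v → v ≤ B * |W| →
        cptU μ Tp Tm α lam (fun ω => v * y ω) ≤
          cptU μ Tp Tm α lam (fun ω => (if 0 ≤ W then kstar * W else khat * W) * y ω) :=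
  single_period_optimal_strategy_general μ Tp Tm α lam hα y A B W kstar khat hk1 hk2 hk3 hk4
end

section
/- Multi-period backward induction (main theorem): for each t = T-1, ..., 0, the supremum of E[V_{t+1}((1+r_t)W_t + v_t y_{t+1})] over admissible v_t \in [A|W_t|, B|W_t|] equals V_t(W_t), where V_t(w) = A_t w^{\alpha} 1_{w \ge 0} - B_t(-w)^{\alpha} 1_{w < 0}, and A_t = \max_{z \in [A,B]} g_t(z), B_t = -\max_{z \in [-B,-A]} l_t(z), with g_t(z) = E[A_{t+1}(1+r_t+y_{t+1}z)_+^{\alpha} - B_{t+1}(1+r_t+y_{t+1}z)_-^{\alpha}] and l_t(z) = E[A_{t+1}(1+r_t+y_{t+1}z)_-^{\alpha} - B_{t+1}(1+r_t+y_{t+1}z)_+^{\alpha}]. Consequently the optimal strategy is v_t^* = k_t^* W_t if W_t \ge 0 and \hat{k}_t^* W_t if W_t < 0, where k_t^* and \hat{k}_t^* are the respective arg-maxima. -/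
/-!
By `α`-homogeneity, `V((1 + r) W + z W y) = W^α V(1 + r + y z)` for `W ≥ 0` and
`(-W)^α Ṽ(1 + r + y z)` for `W ≤ 0`, where `Ṽ(w) = V(-w)` is the reflected value function.
Substituting `v = z W` therefore turns the maximisation over admissible `v ∈ [A|W|, B|W|]` into
the maximisation of `g_t` over `[A, B]` (resp. `l_t` over `[-B, -A]`), scaled by `|W|^α`.
These maxima are attained because `g_t` and `l_t` are continuous, by dominated convergence
with the bound `|V(w)| ≤ C |w|^α` and `E|y|^α < ∞`.
-/

open MeasureTheory Set

/-- The value function `V(w) = a w^α 1_{w≥0} - b (-w)^α 1_{w<0}`. -/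
noncomputable def Vfun (α a b w : ℝ) : ℝ :=
  if 0 ≤ w then a * w ^ α else -b * (-w) ^ α

/-- The reflected value function `Ṽ(w) = a (-w)^α 1_{w<0} - b w^α 1_{w≥0}`. -/
noncomputable def Vtfun (α a b w : ℝ) : ℝ :=
  if 0 ≤ w then -b * w ^ α else a * (-w) ^ α

section ValueFunction

variable {α a b : ℝ}

theorem continuous_Vfun (hα : 0 < α) : Continuous (Vfun α a b) :=
  Continuous.if_le (continuous_const.mul (Real.continuous_rpow_const hα.le))
    (continuous_const.mul ((Real.continuous_rpow_const hα.le).comp continuous_neg))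
    continuous_const continuous_id
    fun w hw => by simp [← hw, Real.zero_rpow hα.ne']

theorem abs_Vfun_le (w : ℝ) : |Vfun α a b w| ≤ (|a| + |b|) * |w| ^ α := by
  unfold Vfun
  split_ifs with hw
  · rw [abs_mul, abs_of_nonneg (Real.rpow_nonneg hw α), abs_of_nonneg hw]
    gcongr
    exact le_add_of_nonneg_right (abs_nonneg b)
  · have hw : 0 ≤ -w := by linarith
    rw [abs_mul, abs_of_nonneg (Real.rpow_nonneg hw α), abs_neg, ← abs_neg w, abs_of_nonneg hw]
    gcongr
    exact le_add_of_nonneg_left (abs_nonneg a)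

theorem Vtfun_eq_Vfun_neg (hα : α ≠ 0) (w : ℝ) : Vtfun α a b w = Vfun α a b (-w) := by
  rcases eq_or_ne w 0 with rfl | hw
  · simp [Vtfun, Vfun, Real.zero_rpow hα]
  · unfold Vtfun Vfun
    split_ifs with h₁ h₂ h₂
    · exact absurd (le_antisymm (neg_nonneg.1 h₂) h₁) hw
    · rw [neg_neg]
    · rfl
    · exact absurd (by linarith) h₂

theorem Vfun_mul_of_nonneg (hα : α ≠ 0) {c : ℝ} (hc : 0 ≤ c) (w : ℝ) :
    Vfun α a b (c * w) = c ^ α * Vfun α a b w := by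
  rcases hc.eq_or_lt with rfl | hc
  · simp [Vfun, Real.zero_rpow hα]
  · simp only [Vfun, mul_nonneg_iff_of_pos_left hc]
    split_ifs with hw
    · rw [Real.mul_rpow hc.le hw]; ring
    · rw [← mul_neg, Real.mul_rpow hc.le (by linarith)]; ring

theorem Vfun_mul_of_nonpos (hα : α ≠ 0) {c : ℝ} (hc : c ≤ 0) (w : ℝ) :
    Vfun α a b (c * w) = (-c) ^ α * Vtfun α a b w := by
  rw [Vtfun_eq_Vfun_neg hα, ← Vfun_mul_of_nonneg hα (neg_nonneg.2 hc), neg_mul_neg]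

end ValueFunction

theorem abs_add_rpow_le_two_rpow_mul {p : ℝ} (hp : 0 ≤ p) (x y : ℝ) :
    |x + y| ^ p ≤ 2 ^ p * (|x| ^ p + |y| ^ p) :=
  calc |x + y| ^ p ≤ (2 * max |x| |y|) ^ p := by
        gcongr
        rw [two_mul]
        exact (abs_add_le x y).trans (add_le_add (le_max_left _ _) (le_max_right _ _))
    _ = 2 ^ p * max |x| |y| ^ p := Real.mul_rpow zero_le_two (le_max_of_le_left (abs_nonneg x))
    _ ≤ 2 ^ p * (|x| ^ p + |y| ^ p) := by
        gcongr
        rcases max_cases |x| |y| with ⟨h, -⟩ | ⟨h, -⟩ <;> rw [h]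
        · exact le_add_of_nonneg_right (by positivity)
        · exact le_add_of_nonneg_left (by positivity)

section ExpectedValue

variable {Ω : Type*} [MeasurableSpace Ω] {μ : Measure Ω} {α a b : ℝ}

/-- Near `z₀`, `|c + Y z|^α ≤ 2^α (|c|^α + (|z₀| + 1)^α |Y|^α)` is an integrable dominating
function, since `|Y|^α` is integrable. -/
theorem continuous_integral_comp_add_mul [IsFiniteMeasure μ] {V : ℝ → ℝ} {C c : ℝ} (hα : 0 ≤ α)
    (hV : Continuous V) (hVle : ∀ w, |V w| ≤ C * |w| ^ α) {Y : Ω → ℝ}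
    (hY : AEStronglyMeasurable Y μ) (hYint : Integrable (fun ω => |Y ω| ^ α) μ) :
    Continuous fun z => ∫ ω, V (c + Y ω * z) ∂μ := by
  have hC : 0 ≤ C := by simpa using (abs_nonneg _).trans (hVle 1)
  refine continuous_iff_continuousAt.2 fun z₀ => continuousAt_of_dominated
    (bound := fun ω => C * 2 ^ α * (|c| ^ α + (|z₀| + 1) ^ α * |Y ω| ^ α)) ?_ ?_ ?_ ?_
  · exact .of_forall fun z =>
      hV.comp_aestronglyMeasurable (aestronglyMeasurable_const.add (hY.mul_const z))
  · filter_upwards [Metric.ball_mem_nhds z₀ one_pos] with z hz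
    refine .of_forall fun ω => ?_
    have hz : |z| ≤ |z₀| + 1 := by
      have := abs_sub_abs_le_abs_sub z z₀
      rw [Metric.mem_ball, Real.dist_eq] at hz
      linarith
    calc |V (c + Y ω * z)| ≤ C * |c + Y ω * z| ^ α := hVle _
      _ ≤ C * (2 ^ α * (|c| ^ α + |Y ω * z| ^ α)) := by
          gcongr; exact abs_add_rpow_le_two_rpow_mul hα _ _
      _ ≤ C * (2 ^ α * (|c| ^ α + (|z₀| + 1) ^ α * |Y ω| ^ α)) := by
          rw [abs_mul, Real.mul_rpow (abs_nonneg _) (abs_nonneg _), mul_comm (|Y ω| ^ α)]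
          gcongr
      _ = C * 2 ^ α * (|c| ^ α + (|z₀| + 1) ^ α * |Y ω| ^ α) := by ring
  · exact ((integrable_const _).add (hYint.const_mul _)).const_mul _
  · exact .of_forall fun ω => (hV.comp (continuous_const.add (continuous_const.mul
      continuous_id))).continuousAt

theorem continuous_integral_Vfun [IsFiniteMeasure μ] (hα : 0 < α) {Y : Ω → ℝ}
    (hY : AEStronglyMeasurable Y μ) (hYint : Integrable (fun ω => |Y ω| ^ α) μ) (c : ℝ) :
    Continuous fun z => ∫ ω, Vfun α a b (c + Y ω * z) ∂μ :=
  continuous_integral_comp_add_mul hα.le (continuous_Vfun hα) abs_Vfun_le hY hYint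

theorem continuous_integral_Vtfun [IsFiniteMeasure μ] (hα : 0 < α) {Y : Ω → ℝ}
    (hY : AEStronglyMeasurable Y μ) (hYint : Integrable (fun ω => |Y ω| ^ α) μ) (c : ℝ) :
    Continuous fun z => ∫ ω, Vtfun α a b (c + Y ω * z) ∂μ := by
  simp only [Vtfun_eq_Vfun_neg hα.ne']
  refine continuous_integral_comp_add_mul (C := |a| + |b|) hα.le
    ((continuous_Vfun hα).comp continuous_neg) (fun w => ?_) hY hYint
  rw [Function.comp_apply, ← abs_neg w]
  exact abs_Vfun_le _

theorem integral_Vfun_mul_of_nonneg (hα : α ≠ 0) {W : ℝ} (hW : 0 ≤ W) (c z : ℝ) (Y : Ω → ℝ) :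
    ∫ ω, Vfun α a b (c * W + z * W * Y ω) ∂μ = W ^ α * ∫ ω, Vfun α a b (c + Y ω * z) ∂μ := by
  simp_rw [show ∀ ω, c * W + z * W * Y ω = W * (c + Y ω * z) from fun ω => by ring,
    Vfun_mul_of_nonneg hα hW]
  exact integral_const_mul _ _

theorem integral_Vfun_mul_of_nonpos (hα : α ≠ 0) {W : ℝ} (hW : W ≤ 0) (c z : ℝ) (Y : Ω → ℝ) :
    ∫ ω, Vfun α a b (c * W + z * W * Y ω) ∂μ = (-W) ^ α * ∫ ω, Vtfun α a b (c + Y ω * z) ∂μ := by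
  simp_rw [show ∀ ω, c * W + z * W * Y ω = W * (c + Y ω * z) from fun ω => by ring,
    Vfun_mul_of_nonpos hα hW]
  exact integral_const_mul _ _

end ExpectedValue

theorem isGreatest_sSup_image_Icc {f : ℝ → ℝ} {A B : ℝ} (hAB : A ≤ B)
    (hf : ContinuousOn f (Icc A B)) : IsGreatest (f '' Icc A B) (sSup (f '' Icc A B)) :=
  (isCompact_Icc.image_of_continuousOn hf).isGreatest_sSup ((nonempty_Icc.2 hAB).image f)

theorem isGreatest_image_of_forall_le {ι β : Type*} [Preorder β] {f : ι → β} {s : Set ι} {k : ι} (hk : k ∈ s)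
    (hmax : ∀ z ∈ s, f z ≤ f k) : IsGreatest (f '' s) (f k) :=
  ⟨mem_image_of_mem f hk, by rintro _ ⟨z, hz, rfl⟩; exact hmax z hz⟩

section Admissible

variable {F G : ℝ → ℝ} {A B W c m : ℝ}

/-- The substitution `v = z W` maps `[A, B]` onto the admissible interval `[A|W|, B|W|]`. -/
theorem isGreatest_admissible_of_nonneg (hAB : A ≤ B) (hW : 0 ≤ W) (hc : 0 ≤ c)
    (hFG : ∀ z, F (z * W) = c * G z) (hG : IsGreatest (G '' Icc A B) m) :
    IsGreatest {u | ∃ v, A * |W| ≤ v ∧ v ≤ B * |W| ∧ u = F v} (c * m) := by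
  have hset : {u | ∃ v, A * |W| ≤ v ∧ v ≤ B * |W| ∧ u = F v} = (c * ·) '' (G '' Icc A B) := by
    rw [image_image, ← funext hFG, ← image_image F, image_mul_right_Icc hAB hW, abs_of_nonneg hW]
    ext u
    simp only [mem_ofPred_eq, mem_image, mem_Icc, and_assoc, eq_comm]
  rw [hset]
  exact (monotone_mul_left_of_nonneg hc).map_isGreatest hG

theorem isGreatest_admissible_of_nonpos (hAB : A ≤ B) (hW : W ≤ 0) (hc : 0 ≤ c)
    (hFG : ∀ z, F (z * W) = c * G z) (hG : IsGreatest (G '' Icc (-B) (-A)) m) :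
    IsGreatest {u | ∃ v, A * |W| ≤ v ∧ v ≤ B * |W| ∧ u = F v} (c * m) := by
  have hFG' : ∀ z, F (z * -W) = c * (G ∘ Neg.neg) z := fun z => by
    rw [mul_neg, ← neg_mul, hFG, Function.comp_apply]
  have hG' : IsGreatest ((G ∘ Neg.neg) '' Icc A B) m := by rwa [image_comp, image_neg_Icc]
  simpa only [abs_neg] using isGreatest_admissible_of_nonneg hAB (neg_nonneg.2 hW) hc hFG' hG'

end Admissible

theorem multi_period_backward_induction_general {Ω : Type*} [MeasurableSpace Ω] (μ : Measure Ω)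
    [IsProbabilityMeasure μ] (T : ℕ) (α A B : ℝ) (r : ℕ → ℝ) (y : ℕ → Ω → ℝ)
    (At Bt : ℕ → ℝ) (g l : ℕ → ℝ → ℝ)
    (hα : 0 < α) (hA : A ≤ 0) (hB : 0 < B)
    (hmeas : ∀ t, Measurable (y t))
    (hint : ∀ t, Integrable (fun ω => |y t ω| ^ α) μ)
    (hg : ∀ t z, g t z = ∫ ω, Vfun α (At (t + 1)) (Bt (t + 1)) (1 + r t + y (t + 1) ω * z) ∂μ)
    (hl : ∀ t z, l t z = ∫ ω, Vtfun α (At (t + 1)) (Bt (t + 1)) (1 + r t + y (t + 1) ω * z) ∂μ)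
    (hAt : ∀ t, t < T - 1 → At t = sSup (g t '' Icc A B))
    (hBt : ∀ t, t < T - 1 → Bt t = -sSup (l t '' Icc (-B) (-A))) :
    ∀ t, t < T - 1 → ∀ W : ℝ,
      IsGreatest
        {u : ℝ | ∃ v : ℝ, A * |W| ≤ v ∧ v ≤ B * |W| ∧
          u = ∫ ω, Vfun α (At (t + 1)) (Bt (t + 1)) ((1 + r t) * W + v * y (t + 1) ω) ∂μ}
        (Vfun α (At t) (Bt t) W) ∧
      (∀ kst ∈ Icc A B, (∀ z ∈ Icc A B, g t z ≤ g t kst) → 0 ≤ W →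
        (∫ ω, Vfun α (At (t + 1)) (Bt (t + 1)) ((1 + r t) * W + kst * W * y (t + 1) ω) ∂μ) =
          Vfun α (At t) (Bt t) W) ∧
      (∀ kht ∈ Icc (-B) (-A), (∀ z ∈ Icc (-B) (-A), l t z ≤ l t kht) → W < 0 →
        (∫ ω, Vfun α (At (t + 1)) (Bt (t + 1)) ((1 + r t) * W + kht * W * y (t + 1) ω) ∂μ) =
          Vfun α (At t) (Bt t) W) := by
  intro t ht W
  have hAB : A ≤ B := hA.trans hB.le
  have hY := (hmeas (t + 1)).aestronglyMeasurable (μ := μ)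
  have hgA : IsGreatest (g t '' Icc A B) (At t) := by
    rw [hAt t ht, funext (hg t)]
    exact isGreatest_sSup_image_Icc hAB (continuous_integral_Vfun hα hY (hint _) _).continuousOn
  have hlB : IsGreatest (l t '' Icc (-B) (-A)) (-Bt t) := by
    rw [hBt t ht, neg_neg, funext (hl t)]
    exact isGreatest_sSup_image_Icc (neg_le_neg hAB)
      (continuous_integral_Vtfun hα hY (hint _) _).continuousOn
  rcases le_or_gt 0 W with hW | hW
  · have hF : ∀ z, ∫ ω, Vfun α (At (t + 1)) (Bt (t + 1)) ((1 + r t) * W + z * W * y (t + 1) ω) ∂μ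
        = W ^ α * g t z := fun z => by rw [hg, integral_Vfun_mul_of_nonneg hα.ne' hW]
    have hV : Vfun α (At t) (Bt t) W = W ^ α * At t := by rw [Vfun, if_pos hW, mul_comm]
    refine ⟨hV ▸ isGreatest_admissible_of_nonneg hAB hW (by positivity) hF hgA,
      fun k hk hmax _ => ?_, fun _ _ _ h => absurd h hW.not_gt⟩
    rw [hF, hV, hgA.unique (isGreatest_image_of_forall_le hk hmax)]
  · have hF : ∀ z, ∫ ω, Vfun α (At (t + 1)) (Bt (t + 1)) ((1 + r t) * W + z * W * y (t + 1) ω) ∂μ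
        = (-W) ^ α * l t z := fun z => by rw [hl, integral_Vfun_mul_of_nonpos hα.ne' hW.le]
    have hV : Vfun α (At t) (Bt t) W = (-W) ^ α * -Bt t := by
      rw [Vfun, if_neg hW.not_ge]; ring
    refine ⟨hV ▸ isGreatest_admissible_of_nonpos hAB hW.le (Real.rpow_nonneg (by linarith) α) hF hlB,
      fun _ _ _ h => absurd h hW.not_ge, fun k hk hmax _ => ?_⟩
    rw [hF, hV, hlB.unique (isGreatest_image_of_forall_le hk hmax)]

/-- Multi-period backward induction (main theorem): with
`g_t(z) = E[A_{t+1}(1+r_t+y_{t+1}z)₊^α - B_{t+1}(1+r_t+y_{t+1}z)₋^α]`,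
`l_t(z) = E[A_{t+1}(1+r_t+y_{t+1}z)₋^α - B_{t+1}(1+r_t+y_{t+1}z)₊^α]`,
`A_t = max_{[A,B]} g_t` and `B_t = -max_{[-B,-A]} l_t`, the supremum of
`E[V_{t+1}((1+r_t)W + v y_{t+1})]` over admissible `v ∈ [A|W|, B|W|]` equals `V_t(W)`,
and the optimum is attained at `v_t* = k_t* W` (`W ≥ 0`) resp. `k̂_t* W` (`W < 0`) for
any arg-maximum `k_t*` of `g_t` resp. `k̂_t*` of `l_t`. -/
theorem multi_period_backward_induction {Ω : Type*} [MeasurableSpace Ω] (μ : Measure Ω)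
    [IsProbabilityMeasure μ] (T : ℕ) (α A B : ℝ) (r : ℕ → ℝ) (y : ℕ → Ω → ℝ)
    (At Bt : ℕ → ℝ) (g l : ℕ → ℝ → ℝ)
    (hα : 0 < α) (hα1 : α < 1) (hA : A ≤ 0) (hB : 0 < B)
    (hr : ∀ t, -1 < r t) (hmeas : ∀ t, Measurable (y t))
    (hint : ∀ t, Integrable (fun ω => |y t ω| ^ α) μ)
    (hg : ∀ t z, g t z = ∫ ω, Vfun α (At (t + 1)) (Bt (t + 1)) (1 + r t + y (t + 1) ω * z) ∂μ)
    (hl : ∀ t z, l t z = ∫ ω, Vtfun α (At (t + 1)) (Bt (t + 1)) (1 + r t + y (t + 1) ω * z) ∂μ)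
    (hAt : ∀ t, t < T - 1 → At t = sSup (g t '' Icc A B))
    (hBt : ∀ t, t < T - 1 → Bt t = -sSup (l t '' Icc (-B) (-A))) :
    ∀ t, t < T - 1 → ∀ W : ℝ,
      IsGreatest
        {u : ℝ | ∃ v : ℝ, A * |W| ≤ v ∧ v ≤ B * |W| ∧
          u = ∫ ω, Vfun α (At (t + 1)) (Bt (t + 1)) ((1 + r t) * W + v * y (t + 1) ω) ∂μ}
        (Vfun α (At t) (Bt t) W) ∧
      (∀ kst ∈ Icc A B, (∀ z ∈ Icc A B, g t z ≤ g t kst) → 0 ≤ W →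
        (∫ ω, Vfun α (At (t + 1)) (Bt (t + 1)) ((1 + r t) * W + kst * W * y (t + 1) ω) ∂μ) =
          Vfun α (At t) (Bt t) W) ∧
      (∀ kht ∈ Icc (-B) (-A), (∀ z ∈ Icc (-B) (-A), l t z ≤ l t kht) → W < 0 →
        (∫ ω, Vfun α (At (t + 1)) (Bt (t + 1)) ((1 + r t) * W + kht * W * y (t + 1) ω) ∂μ) =
          Vfun α (At t) (Bt t) W) :=
  multi_period_backward_induction_general μ T α A B r y At Bt g l hα hA hB hmeas hint hg hl hAt hBt
end
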